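/- arXiv:1808.06239 — 7 statements merged into one kernel-verified Lean document; each statement's English description precedes it below -/
import Mathlib

section
/- If s satisfies ‖∇f(x) + Bs + σ‖s‖s‖ ≤ θ‖∇f(x)‖ with ‖B‖ ≤ κ_B, σ > 0, θ ∈ [0,1) and ‖s‖ < 1, then ‖s‖ ≥ (1−θ)‖∇f(x)‖/(κ_B + σ). -/
open scoped RealInnerProductSpace

/-!
If the model gradient `g + v`, with `g = ∇f(x)` and `v = Bs + σ‖s‖s`, is at most `θ‖g‖`, the
reverse triangle inequality forces `‖v‖ ≥ (1 - θ)‖g‖`. On the other hand `‖Bs‖ ≤ κ_B‖s‖` and,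
since `‖s‖ < 1`, the cubic term has norm `σ‖s‖² ≤ σ‖s‖`, so `‖v‖ ≤ (κ_B + σ)‖s‖`.
-/

theorem one_sub_mul_norm_le_norm_of_norm_add_le {E : Type*} [SeminormedAddCommGroup E]
    {g v : E} {θ : ℝ} (h : ‖g + v‖ ≤ θ * ‖g‖) : (1 - θ) * ‖g‖ ≤ ‖v‖ := by
  linarith [norm_le_add_norm_add g v]

theorem norm_smul_norm_smul_self_le {E : Type*} [SeminormedAddCommGroup E] [NormedSpace ℝ E]
    {σ : ℝ} (hσ : 0 ≤ σ) {s : E} (hs : ‖s‖ ≤ 1) : ‖(σ * ‖s‖) • s‖ ≤ σ * ‖s‖ := by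
  rw [norm_smul, Real.norm_of_nonneg (by positivity)]
  exact mul_le_of_le_one_right (by positivity) hs

theorem norm_apply_add_smul_norm_smul_self_le {E : Type*} [SeminormedAddCommGroup E]
    [NormedSpace ℝ E] (B : E →L[ℝ] E) {κB σ : ℝ} (hB : ‖B‖ ≤ κB) (hσ : 0 ≤ σ) {s : E}
    (hs : ‖s‖ ≤ 1) : ‖B s + (σ * ‖s‖) • s‖ ≤ (κB + σ) * ‖s‖ :=
  calc ‖B s + (σ * ‖s‖) • s‖ ≤ ‖B s‖ + ‖(σ * ‖s‖) • s‖ := norm_add_le _ _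
    _ ≤ κB * ‖s‖ + σ * ‖s‖ :=
      add_le_add (B.le_of_opNorm_le hB s) (norm_smul_norm_smul_self_le hσ hs)
    _ = (κB + σ) * ‖s‖ := by ring

theorem arc_step_lower_bound_general {n : ℕ} (f : EuclideanSpace ℝ (Fin n) → ℝ)
    (x s : EuclideanSpace ℝ (Fin n))
    (B : EuclideanSpace ℝ (Fin n) →L[ℝ] EuclideanSpace ℝ (Fin n))
    (κB σ θ : ℝ) (hB : ‖B‖ ≤ κB) (hσ : 0 < σ)
    (hs : ‖s‖ < 1)
    (hstep : ‖gradient f x + B s + (σ * ‖s‖) • s‖ ≤ θ * ‖gradient f x‖) :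
    ‖s‖ ≥ (1 - θ) * ‖gradient f x‖ / (κB + σ) := by
  rw [add_assoc] at hstep
  have hlower := one_sub_mul_norm_le_norm_of_norm_add_le hstep
  have hupper := norm_apply_add_smul_norm_smul_self_le B hB hσ.le hs.le
  have hκσ : 0 ≤ κB + σ := by linarith [(norm_nonneg B).trans hB]
  exact div_le_of_le_mul₀ hκσ (norm_nonneg s) (by linarith)

/-- Lower bound on the step length from the inexact model-gradient condition. -/
theorem arc_step_lower_bound {n : ℕ} (f : EuclideanSpace ℝ (Fin n) → ℝ)
    (x s : EuclideanSpace ℝ (Fin n))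
    (B : EuclideanSpace ℝ (Fin n) →L[ℝ] EuclideanSpace ℝ (Fin n))
    (hBsym : ∀ u v : EuclideanSpace ℝ (Fin n), ⟪B u, v⟫ = ⟪u, B v⟫)
    (κB σ θ : ℝ) (hκB : 0 ≤ κB) (hB : ‖B‖ ≤ κB) (hσ : 0 < σ)
    (hθ : θ ∈ Set.Ico (0:ℝ) 1) (hs : ‖s‖ < 1)
    (hstep : ‖gradient f x + B s + (σ * ‖s‖) • s‖ ≤ θ * ‖gradient f x‖) :
    ‖s‖ ≥ (1 - θ) * ‖gradient f x‖ / (κB + σ) :=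
  arc_step_lower_bound_general f x s B κB σ θ hB hσ hs hstep
end

section
/- Suppose ‖∇f(x+s) − ∇f(x) − Bs‖ ≤ (M + L/2)‖s‖², ‖∇f(x) + Bs + σ‖s‖s‖ ≤ θ min(‖s‖², ‖∇f(x)‖), and σ ≤ σ_max. Then ‖∇f(x+s)‖ ≤ (M + L/2 + θ + σ_max)‖s‖², i.e., ‖s‖ ≥ sqrt(ζ‖∇f(x+s)‖) with ζ = 1/(M + L/2 + θ + σ_max). -/
open scoped RealInnerProductSpace

/-- In the application `g = ∇f(x)`, `g' = ∇f(x + s)` and `d = B s`. -/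
theorem norm_le_taylor_error_add_model_residual_add {E : Type*} [SeminormedAddCommGroup E]
    [NormedSpace ℝ E] (g g' d s : E) {σ σmax ε η : ℝ} (hσ : 0 ≤ σ) (hσle : σ ≤ σmax)
    (herr : ‖g' - g - d‖ ≤ ε) (hres : ‖g + d + (σ * ‖s‖) • s‖ ≤ η) :
    ‖g'‖ ≤ ε + η + σmax * ‖s‖ ^ 2 := by
  have hreg : ‖(σ * ‖s‖) • s‖ ≤ σmax * ‖s‖ ^ 2 := by
    rw [norm_smul, Real.norm_of_nonneg (by positivity)]
    nlinarith [norm_nonneg s]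
  calc ‖g'‖ = ‖(g' - g - d) + (g + d + (σ * ‖s‖) • s) - (σ * ‖s‖) • s‖ := by
        congr 1; abel
    _ ≤ ‖g' - g - d‖ + ‖g + d + (σ * ‖s‖) • s‖ + ‖(σ * ‖s‖) • s‖ := norm_sub_le_of_le
        (norm_add_le _ _) le_rfl
    _ ≤ ε + η + σmax * ‖s‖ ^ 2 := by gcongr

theorem Real.sqrt_one_div_mul_le_of_le_mul_sq {a c t : ℝ} (ha : 0 ≤ a) (ht : 0 ≤ t)
    (h : a ≤ c * t ^ 2) : √((1 / c) * a) ≤ t := by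
  rw [Real.sqrt_le_left ht]
  rcases le_or_gt c 0 with hc | hc
  · exact (mul_nonpos_of_nonpos_of_nonneg (one_div_nonpos.mpr hc) ha).trans (by positivity)
  · rwa [one_div_mul_eq_div, div_le_iff₀' hc]

theorem arc_step_vs_new_gradient_first_general {n : ℕ} (f : EuclideanSpace ℝ (Fin n) → ℝ)
    (x s : EuclideanSpace ℝ (Fin n))
    (B : EuclideanSpace ℝ (Fin n) →L[ℝ] EuclideanSpace ℝ (Fin n))
    (M L σ σmax θ : ℝ)
    (hσ : 0 < σ) (hσle : σ ≤ σmax) (hθ : θ ∈ Set.Ico (0:ℝ) 1)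
    (herr : ‖gradient f (x + s) - gradient f x - B s‖ ≤ (M + L/2) * ‖s‖^2)
    (hstep : ‖gradient f x + B s + (σ * ‖s‖) • s‖
      ≤ θ * min (‖s‖^2) ‖gradient f x‖) :
    ‖gradient f (x + s)‖ ≤ (M + L/2 + θ + σmax) * ‖s‖^2 ∧
    ‖s‖ ≥ Real.sqrt ((1/(M + L/2 + θ + σmax)) * ‖gradient f (x + s)‖) := by
  have hres : ‖gradient f x + B s + (σ * ‖s‖) • s‖ ≤ θ * ‖s‖ ^ 2 :=
    hstep.trans (mul_le_mul_of_nonneg_left (min_le_left _ _) hθ.1)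
  have hbound : ‖gradient f (x + s)‖ ≤ (M + L/2 + θ + σmax) * ‖s‖^2 := by
    have := norm_le_taylor_error_add_model_residual_add _ _ _ _ hσ.le hσle herr hres
    linarith
  exact ⟨hbound, Real.sqrt_one_div_mul_le_of_le_mul_sq (norm_nonneg _) (norm_nonneg _) hbound⟩

/-- Lower bound on the step length in terms of the gradient at the trial point, first
inner stopping criterion. -/
theorem arc_step_vs_new_gradient_first {n : ℕ} (f : EuclideanSpace ℝ (Fin n) → ℝ)
    (x s : EuclideanSpace ℝ (Fin n))
    (B : EuclideanSpace ℝ (Fin n) →L[ℝ] EuclideanSpace ℝ (Fin n))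
    (hBsym : ∀ u v : EuclideanSpace ℝ (Fin n), ⟪B u, v⟫ = ⟪u, B v⟫)
    (M L σ σmax θ : ℝ) (hM : 0 < M) (hL : 0 < L) (hσmax : 0 < σmax)
    (hσ : 0 < σ) (hσle : σ ≤ σmax) (hθ : θ ∈ Set.Ico (0:ℝ) 1)
    (herr : ‖gradient f (x + s) - gradient f x - B s‖ ≤ (M + L/2) * ‖s‖^2)
    (hstep : ‖gradient f x + B s + (σ * ‖s‖) • s‖
      ≤ θ * min (‖s‖^2) ‖gradient f x‖) :
    ‖gradient f (x + s)‖ ≤ (M + L/2 + θ + σmax) * ‖s‖^2 ∧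
    ‖s‖ ≥ Real.sqrt ((1/(M + L/2 + θ + σmax)) * ‖gradient f (x + s)‖) :=
  arc_step_vs_new_gradient_first_general f x s B M L σ σmax θ hσ hσle hθ herr hstep
end

section
/- Suppose ‖∇f(x+s) − ∇f(x) − Bs‖ ≤ (M + L/2)‖s‖², ‖∇²f(x+βs)‖ ≤ κ_H for β ∈ [0,1], ‖∇f(x) + Bs + σ‖s‖s‖ ≤ θ min(1,‖s‖)‖∇f(x)‖ with θ ∈ (0,1), and σ ≤ σ_max. Then (1−θ)‖∇f(x+s)‖ ≤ (M + L/2 + θκ_H + σ_max)‖s‖². -/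
/-!
Split `∇f(x+s) = (∇f(x+s) - ∇f(x) - B s) + (∇f(x) + B s + σ‖s‖ s) - σ‖s‖ s`: the three pieces
are bounded by the model error, the stopping residual `θ min(1,‖s‖) ‖∇f(x)‖` and `σ_max ‖s‖²`.
The mean value inequality gives `‖∇f(x)‖ ≤ ‖∇f(x+s)‖ + κ_H ‖s‖`, and the factor `min(1,‖s‖)`
turns the residual into at most `θ ‖∇f(x+s)‖ + θ κ_H ‖s‖²`, whose first term is absorbed on
the left.
-/

open scoped RealInnerProductSpace

open Set

theorem ContDiff.gradient {F : Type*} [NormedAddCommGroup F] [InnerProductSpace ℝ F]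
    [CompleteSpace F] {f : F → ℝ} {n : WithTop ℕ∞} (hf : ContDiff ℝ (n + 1) f) :
    ContDiff ℝ n (gradient f) :=
  (InnerProductSpace.toDual ℝ F).symm.toContinuousLinearEquiv.contDiff.comp
    (hf.fderiv_right le_rfl)

theorem norm_sub_le_of_norm_fderiv_le_segment {E G : Type*} [NormedAddCommGroup E]
    [NormedSpace ℝ E] [NormedAddCommGroup G] [NormedSpace ℝ G] {g : E → G} {x s : E} {C : ℝ}
    (hg : ∀ β ∈ Icc (0 : ℝ) 1, DifferentiableAt ℝ g (x + β • s))
    (hC : ∀ β ∈ Icc (0 : ℝ) 1, ‖fderiv ℝ g (x + β • s)‖ ≤ C) :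
    ‖g (x + s) - g x‖ ≤ C * ‖s‖ := by
  have hseg : segment ℝ x (x + s) = (fun β : ℝ => x + β • s) '' Icc 0 1 := by
    simp [segment_eq_image']
  have h := (convex_segment x (x + s)).norm_image_sub_le_of_norm_fderiv_le
    (by rw [hseg]; rintro _ ⟨β, hβ, rfl⟩; exact hg β hβ)
    (by rw [hseg]; rintro _ ⟨β, hβ, rfl⟩; exact hC β hβ)
    (left_mem_segment ℝ x (x + s)) (right_mem_segment ℝ x (x + s))
  simpa using h

theorem min_one_mul_add_le {t a k : ℝ} (ht : 0 ≤ t) (ha : 0 ≤ a) (hk : 0 ≤ k) :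
    min 1 t * (a + k * t) ≤ a + k * t ^ 2 := by
  have h₁ : min 1 t * a ≤ a := mul_le_of_le_one_left ha (min_le_left 1 t)
  have h₂ : min 1 t * (k * t) ≤ t * (k * t) :=
    mul_le_mul_of_nonneg_right (min_le_right 1 t) (by positivity)
  linarith

theorem norm_le_norm_sub_sub_add_norm_add_add_add_norm {G : Type*} [SeminormedAddCommGroup G]
    (a b c d : G) : ‖a‖ ≤ ‖a - b - c‖ + ‖b + c + d‖ + ‖d‖ := by
  calc ‖a‖ = ‖(a - b - c) + (b + c + d) - d‖ := by abel_nf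
    _ ≤ ‖a - b - c‖ + ‖b + c + d‖ + ‖d‖ := norm_sub_le_of_le (norm_add_le _ _) le_rfl

theorem arc_step_vs_new_gradient_second_general {n : ℕ} (f : EuclideanSpace ℝ (Fin n) → ℝ)
    (x s : EuclideanSpace ℝ (Fin n)) (hf : ContDiff ℝ 2 f)
    (B : EuclideanSpace ℝ (Fin n) →L[ℝ] EuclideanSpace ℝ (Fin n))
    (M L κH σ σmax θ : ℝ) (hσ : 0 < σ) (hσle : σ ≤ σmax) (hθ : θ ∈ Set.Ioo (0:ℝ) 1)
    (herr : ‖gradient f (x + s) - gradient f x - B s‖ ≤ (M + L/2) * ‖s‖^2)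
    (hH : ∀ β : ℝ, β ∈ Set.Icc (0:ℝ) 1 →
      ‖fderiv ℝ (gradient f) (x + β • s)‖ ≤ κH)
    (hstep : ‖gradient f x + B s + (σ * ‖s‖) • s‖
      ≤ θ * min 1 ‖s‖ * ‖gradient f x‖) :
    (1 - θ) * ‖gradient f (x + s)‖ ≤ (M + L/2 + θ*κH + σmax) * ‖s‖^2 := by
  set g₀ := gradient f x
  set g₁ := gradient f (x + s)
  have hκH : 0 ≤ κH := (norm_nonneg _).trans (hH 0 ⟨le_rfl, zero_le_one⟩)
  have hdiff : Differentiable ℝ (gradient f) :=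
    (hf.gradient (n := 1)).differentiable one_ne_zero
  have hmv : ‖g₁ - g₀‖ ≤ κH * ‖s‖ :=
    norm_sub_le_of_norm_fderiv_le_segment (fun β _ => hdiff _) hH
  have hg₀ : ‖g₀‖ ≤ ‖g₁‖ + κH * ‖s‖ := by
    linarith [norm_sub_norm_le g₀ g₁, norm_sub_rev g₀ g₁]
  have hscaled : θ * min 1 ‖s‖ * ‖g₀‖ ≤ θ * (‖g₁‖ + κH * ‖s‖ ^ 2) := by
    rw [mul_assoc]
    refine mul_le_mul_of_nonneg_left ?_ hθ.1.le
    calc min 1 ‖s‖ * ‖g₀‖ ≤ min 1 ‖s‖ * (‖g₁‖ + κH * ‖s‖) := by gcongr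
      _ ≤ ‖g₁‖ + κH * ‖s‖ ^ 2 := min_one_mul_add_le (norm_nonneg s) (norm_nonneg _) hκH
  have hreg : ‖(σ * ‖s‖) • s‖ ≤ σmax * ‖s‖ ^ 2 := by
    rw [norm_smul, Real.norm_of_nonneg (by positivity), mul_assoc, ← sq]
    gcongr
  have hsplit := norm_le_norm_sub_sub_add_norm_add_add_add_norm g₁ g₀ (B s) ((σ * ‖s‖) • s)
  linarith

/-- Lower bound on the step length in terms of the gradient at the trial point, second
inner stopping criterion, under a uniform Hessian bound along the segment. -/
theorem arc_step_vs_new_gradient_second {n : ℕ} (f : EuclideanSpace ℝ (Fin n) → ℝ)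
    (x s : EuclideanSpace ℝ (Fin n)) (hf : ContDiff ℝ 2 f)
    (B : EuclideanSpace ℝ (Fin n) →L[ℝ] EuclideanSpace ℝ (Fin n))
    (hBsym : ∀ u v : EuclideanSpace ℝ (Fin n), ⟪B u, v⟫ = ⟪u, B v⟫)
    (M L κH σ σmax θ : ℝ) (hM : 0 < M) (hL : 0 < L) (hκH : 0 < κH)
    (hσmax : 0 < σmax) (hσ : 0 < σ) (hσle : σ ≤ σmax) (hθ : θ ∈ Set.Ioo (0:ℝ) 1)
    (herr : ‖gradient f (x + s) - gradient f x - B s‖ ≤ (M + L/2) * ‖s‖^2)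
    (hH : ∀ β : ℝ, β ∈ Set.Icc (0:ℝ) 1 →
      ‖fderiv ℝ (gradient f) (x + β • s)‖ ≤ κH)
    (hstep : ‖gradient f x + B s + (σ * ‖s‖) • s‖
      ≤ θ * min 1 ‖s‖ * ‖gradient f x‖) :
    (1 - θ) * ‖gradient f (x + s)‖ ≤ (M + L/2 + θ*κH + σmax) * ‖s‖^2 :=
  arc_step_vs_new_gradient_second_general f x s hf B M L κH σ σmax θ hσ hσle hθ herr hH hstep
end

section
/- Let f be bounded below by f_low and suppose that at each of k successful steps, f(x_j) − f(x_{j+1}) ≥ κ_s⁻¹‖∇f(x_{j+1})‖^{3/2} and ‖∇f(x_{j+1})‖ > ε, while f does not increase elsewhere. Then the number of such successful steps is at most ⌊κ_s(f(x₀) − f_low)/ε^{3/2}⌋. -/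
/-!
Each successful step lowers `f` by at least `κ_s⁻¹ ε^{3/2}`, every other step does not raise it,
and the total decrease telescopes to at most `f(x₀) − f_low`; so there are at most
`κ_s (f(x₀) − f_low) / ε^{3/2}` successful steps.
-/

open Finset

theorem sum_sub_succ_le_of_antitone {a : ℕ → ℝ} {m : ℝ} (ha : Antitone a) (hlow : ∀ j, m ≤ a j)
    (S : Finset ℕ) : ∑ j ∈ S, (a j - a (j + 1)) ≤ a 0 - m := by
  obtain ⟨N, hSN⟩ : ∃ N, S ⊆ range N := ⟨S.sup id + 1, fun j hj =>
    mem_range.mpr (Nat.lt_succ_of_le (le_sup (f := id) hj))⟩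
  calc ∑ j ∈ S, (a j - a (j + 1))
      ≤ ∑ j ∈ range N, (a j - a (j + 1)) :=
        sum_le_sum_of_subset_of_nonneg hSN fun j _ _ => sub_nonneg.mpr (ha j.le_succ)
    _ = a 0 - a N := sum_range_sub' a N
    _ ≤ a 0 - m := by linarith [hlow N]

theorem card_le_floor_of_le_sub_succ {a : ℕ → ℝ} {m δ : ℝ} (ha : Antitone a)
    (hlow : ∀ j, m ≤ a j) (hδ : 0 < δ) {S : Finset ℕ} (hS : ∀ j ∈ S, δ ≤ a j - a (j + 1)) :
    S.card ≤ ⌊(a 0 - m) / δ⌋₊ := by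
  refine Nat.le_floor <| (le_div_iff₀ hδ).mpr ?_
  calc (S.card : ℝ) * δ = S.card • δ := (nsmul_eq_mul _ _).symm
    _ ≤ ∑ j ∈ S, (a j - a (j + 1)) := card_nsmul_le_sum S _ _ hS
    _ ≤ a 0 - m := sum_sub_succ_le_of_antitone ha hlow S

/-- Counting argument for the `O(ε^{-3/2})` first-order complexity bound: the number of
successful steps, on each of which the objective decreases by at least
`κ_s⁻¹‖∇f(x_{j+1})‖^{3/2}` with `‖∇f(x_{j+1})‖ > ε`, is at most
`⌊κ_s (f(x₀) − f_low)/ε^{3/2}⌋`. -/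
theorem arc_successful_iteration_count {n : ℕ} (f : EuclideanSpace ℝ (Fin n) → ℝ)
    (x : ℕ → EuclideanSpace ℝ (Fin n)) (flow κs ε : ℝ)
    (hκs : 0 < κs) (hε : 0 < ε)
    (hlow : ∀ y, flow ≤ f y)
    (S : Finset ℕ)
    (hmono : ∀ j, f (x (j+1)) ≤ f (x j))
    (hsucc : ∀ j ∈ S,
      f (x j) - f (x (j+1)) ≥ κs⁻¹ * ‖gradient f (x (j+1))‖^((3:ℝ)/2) ∧
      ‖gradient f (x (j+1))‖ > ε) :
    S.card ≤ ⌊κs * (f (x 0) - flow) / ε^((3:ℝ)/2)⌋₊ := by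
  have hdrop : ∀ j ∈ S, κs⁻¹ * ε ^ ((3:ℝ)/2) ≤ f (x j) - f (x (j+1)) := fun j hj =>
    calc κs⁻¹ * ε ^ ((3:ℝ)/2) ≤ κs⁻¹ * ‖gradient f (x (j+1))‖ ^ ((3:ℝ)/2) := by
          gcongr; exact (hsucc j hj).2.le
      _ ≤ f (x j) - f (x (j+1)) := (hsucc j hj).1
  have hcount := card_le_floor_of_le_sub_succ (antitone_nat_of_succ_le hmono) (fun j => hlow (x j))
    (by positivity) hdrop
  rwa [div_mul_eq_div_div, div_inv_eq_mul, mul_comm (f (x 0) - flow)] at hcount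
end

section
/- Suppose a sequence (σ_k) with σ₀ > 0 satisfies σ_{j+1} ≥ γ₁σ_j on successful iterations, σ_{j+1} ≥ γ₂σ_j on unsuccessful iterations of type 1, σ_{j+1} = σ_j on unsuccessful iterations of type 2, and σ_k ≤ σ_max for all k, with 0 < γ₁ < 1 < γ₂. Then the number |U₁| of type-1 unsuccessful iterations among the first k satisfies |U₁| ≤ |S|·|log γ₁|/log γ₂ + (1/log γ₂)·log(σ_max/σ₀), where |S| is the number of successful iterations. -/
/-! Each iteration multiplies `σ` by at least `γ₁` (successful), `γ₂` (unsuccessful of type 1)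
or `1` (unsuccessful of type 2), so `σ₀ γ₁^|S| γ₂^|U₁| ≤ σ_k ≤ σ_max`; taking logarithms and
solving for `|U₁|` gives the bound, since `log γ₂ > 0` and `log γ₁ = -|log γ₁|`. -/

open Finset

theorem mul_prod_range_le_of_mul_le_succ {σ c : ℕ → ℝ} {k : ℕ}
    (hc : ∀ j < k, 0 ≤ c j) (hstep : ∀ j < k, c j * σ j ≤ σ (j + 1)) :
    σ 0 * ∏ j ∈ range k, c j ≤ σ k := by
  induction k with
  | zero => simp
  | succ m ih =>
    have ih' := ih (fun j hj => hc j (by omega)) (fun j hj => hstep j (by omega))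
    calc σ 0 * ∏ j ∈ range (m + 1), c j = c m * (σ 0 * ∏ j ∈ range m, c j) := by
          rw [prod_range_succ]; ring
      _ ≤ c m * σ m := mul_le_mul_of_nonneg_left ih' (hc m (by omega))
      _ ≤ σ (m + 1) := hstep m (by omega)

theorem prod_range_ite_mem_mul_ite_mem {S U : Finset ℕ} {k : ℕ} (a b : ℝ)
    (hS : S ⊆ range k) (hU : U ⊆ range k) :
    ∏ j ∈ range k, (if j ∈ S then a else 1) * (if j ∈ U then b else 1) = a ^ #S * b ^ #U := by
  rw [prod_mul_distrib, prod_ite_mem, prod_ite_mem, inter_eq_right.mpr hS,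
    inter_eq_right.mpr hU, prod_const, prod_const]

theorem card_le_of_mul_pow_mul_pow_le {a b γ₁ γ₂ : ℝ} {s u : ℕ}
    (ha : 0 < a) (hγ₁ : 0 < γ₁) (hγ₁1 : γ₁ < 1) (hγ₂ : 1 < γ₂)
    (h : a * γ₁ ^ s * γ₂ ^ u ≤ b) :
    (u : ℝ) ≤ s * |Real.log γ₁| / Real.log γ₂ + (1 / Real.log γ₂) * Real.log (b / a) := by
  have hlogγ₂ : 0 < Real.log γ₂ := Real.log_pos hγ₂
  have hb : 0 < b := lt_of_lt_of_le (by positivity) h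
  have hlog : Real.log a + s * Real.log γ₁ + u * Real.log γ₂ ≤ Real.log b := by
    have := Real.log_le_log (by positivity) h
    rwa [Real.log_mul (by positivity) (by positivity), Real.log_mul ha.ne' (by positivity),
      Real.log_pow, Real.log_pow] at this
  rw [abs_of_neg (Real.log_neg hγ₁ hγ₁1), Real.log_div hb.ne' ha.ne', one_div_mul_eq_div,
    ← add_div, le_div_iff₀ hlogγ₂]
  linarith

theorem arc_unsuccessful_iteration_count_general (σ : ℕ → ℝ) (σmax γ₁ γ₂ : ℝ) (k : ℕ)
    (S U₁ U₂ : Finset ℕ)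
    (hγ₁ : 0 < γ₁) (hγ₁1 : γ₁ < 1) (hγ₂ : 1 < γ₂)
    (hpos : ∀ j, 0 < σ j) (hσmax : σ k ≤ σmax)
    (hpart : ∀ j ∈ Finset.range k, (j ∈ S ∧ j ∉ U₁ ∧ j ∉ U₂) ∨
      (j ∉ S ∧ j ∈ U₁ ∧ j ∉ U₂) ∨ (j ∉ S ∧ j ∉ U₁ ∧ j ∈ U₂))
    (hSsub : S ⊆ Finset.range k) (hU₁sub : U₁ ⊆ Finset.range k)
    (hS : ∀ j ∈ S, σ (j+1) ≥ γ₁ * σ j)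
    (hU₁ : ∀ j ∈ U₁, σ (j+1) ≥ γ₂ * σ j)
    (hU₂ : ∀ j ∈ U₂, σ (j+1) = σ j) :
    (U₁.card : ℝ) ≤ S.card * |Real.log γ₁| / Real.log γ₂
      + (1 / Real.log γ₂) * Real.log (σmax / σ 0) := by
  set c : ℕ → ℝ := fun j => (if j ∈ S then γ₁ else 1) * (if j ∈ U₁ then γ₂ else 1)
  have hc : ∀ j < k, 0 ≤ c j := fun j _ => by positivity
  have hstep : ∀ j < k, c j * σ j ≤ σ (j + 1) := by
    intro j hj
    rcases hpart j (mem_range.mpr hj) with ⟨hjS, hjU₁, -⟩ | ⟨hjS, hjU₁, -⟩ | ⟨hjS, hjU₁, hjU₂⟩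
    · simpa [c, hjS, hjU₁] using hS j hjS
    · simpa [c, hjS, hjU₁] using hU₁ j hjU₁
    · simp [c, hjS, hjU₁, hU₂ j hjU₂]
  have hgrowth := mul_prod_range_le_of_mul_le_succ hc hstep
  rw [prod_range_ite_mem_mul_ite_mem γ₁ γ₂ hSsub hU₁sub, ← mul_assoc] at hgrowth
  exact card_le_of_mul_pow_mul_pow_le (hpos 0) hγ₁ hγ₁1 hγ₂ (hgrowth.trans hσmax)

/-- Bound on the number of type-1 unsuccessful iterations of the ARC algorithm in terms
of the number of successful iterations. -/
theorem arc_unsuccessful_iteration_count (σ : ℕ → ℝ) (σmax γ₁ γ₂ : ℝ) (k : ℕ)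
    (S U₁ U₂ : Finset ℕ)
    (hγ₁ : 0 < γ₁) (hγ₁1 : γ₁ < 1) (hγ₂ : 1 < γ₂)
    (hpos : ∀ j, 0 < σ j) (hσmax : σ k ≤ σmax)
    (hpart : ∀ j ∈ Finset.range k, (j ∈ S ∧ j ∉ U₁ ∧ j ∉ U₂) ∨
      (j ∉ S ∧ j ∈ U₁ ∧ j ∉ U₂) ∨ (j ∉ S ∧ j ∉ U₁ ∧ j ∈ U₂))
    (hSsub : S ⊆ Finset.range k) (hU₁sub : U₁ ⊆ Finset.range k)
    (hU₂sub : U₂ ⊆ Finset.range k)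
    (hS : ∀ j ∈ S, σ (j+1) ≥ γ₁ * σ j)
    (hU₁ : ∀ j ∈ U₁, σ (j+1) ≥ γ₂ * σ j)
    (hU₂ : ∀ j ∈ U₂, σ (j+1) = σ j) :
    (U₁.card : ℝ) ≤ S.card * |Real.log γ₁| / Real.log γ₂
      + (1 / Real.log γ₂) * Real.log (σmax / σ 0) :=
  arc_unsuccessful_iteration_count_general σ σmax γ₁ γ₂ k S U₁ U₂ hγ₁ hγ₁1 hγ₂ hpos hσmax hpart
    hSsub hU₁sub hS hU₁ hU₂
end

section
/- Let f be bounded below by f_low and suppose at every successful iteration f(x_j) − f(x_{j+1}) ≥ η₁(σ_min/3)‖s_j‖³, with f nonincreasing along the whole sequence. Then the number of successful iterations with ‖s_j‖ ≥ 1 is at most ⌊(3/(η₁σ_min))(f(x₀) − f_low)⌋, and Σ_{j successful}‖s_j‖³ < ∞, so ‖s_j‖ → 0 along successful iterations. -/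
/-!
Summing the decrease condition telescopes: along the iterates `f` drops by at least
`c ∑ ‖s_j‖³` (`c = η₁ σ_min / 3`) over the successful steps, and never increases on the others,
while it stays above `f_low`. Hence `c ∑_{j ∈ S} ‖s_j‖³ ≤ f(x₀) - f_low`: the series converges, its
terms tend to zero, and each successful step with `‖s_j‖ ≥ 1` uses up at least `c` of the budget.
-/

open Filter Finset

section Descent

variable {u d : ℕ → ℝ} {L : ℝ}

lemma sum_range_le_sub_of_le_sub (hd : ∀ j, d j ≤ u j - u (j + 1)) (hL : ∀ j, L ≤ u j) (N : ℕ) :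
    ∑ j ∈ range N, d j ≤ u 0 - L :=
  calc ∑ j ∈ range N, d j ≤ ∑ j ∈ range N, (u j - u (j + 1)) := sum_le_sum fun j _ => hd j
    _ = u 0 - u N := sum_range_sub' u N
    _ ≤ u 0 - L := by linarith [hL N]

lemma summable_of_le_sub (hd₀ : ∀ j, 0 ≤ d j) (hd : ∀ j, d j ≤ u j - u (j + 1))
    (hL : ∀ j, L ≤ u j) : Summable d :=
  summable_of_sum_range_le hd₀ (sum_range_le_sub_of_le_sub hd hL)

lemma tsum_le_sub_of_le_sub (hd₀ : ∀ j, 0 ≤ d j) (hd : ∀ j, d j ≤ u j - u (j + 1))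
    (hL : ∀ j, L ≤ u j) : ∑' j, d j ≤ u 0 - L :=
  Real.tsum_le_of_sum_range_le hd₀ (sum_range_le_sub_of_le_sub hd hL)

lemma card_mul_le_sub_of_le_sub (hd₀ : ∀ j, 0 ≤ d j) (hd : ∀ j, d j ≤ u j - u (j + 1))
    (hL : ∀ j, L ≤ u j) {c : ℝ} (T : Finset ℕ) (hT : ∀ j ∈ T, c ≤ d j) : #T * c ≤ u 0 - L :=
  calc #T * c = ∑ _j ∈ T, c := by rw [sum_const, nsmul_eq_mul]
    _ ≤ ∑ j ∈ T, d j := sum_le_sum hT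
    _ ≤ ∑' j, d j := (summable_of_le_sub hd₀ hd hL).sum_le_tsum T fun j _ => hd₀ j
    _ ≤ u 0 - L := tsum_le_sub_of_le_sub hd₀ hd hL

end Descent

lemma tendsto_inf_principal_of_tendsto_indicator {α : Type*} {l : Filter α} {S : Set α}
    {g : α → ℝ} {a : ℝ} (h : Tendsto (S.indicator g) l (nhds a)) :
    Tendsto g (l ⊓ 𝓟 S) (nhds a) :=
  (h.mono_left inf_le_left).congr' <| eventually_inf_principal.2 <|
    Eventually.of_forall fun _ hj => Set.indicator_of_mem hj g

lemma tendsto_zero_of_tendsto_pow_zero {α : Type*} {l : Filter α} {a : α → ℝ}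
    (ha : ∀ i, 0 ≤ a i) {k : ℕ} (hk : k ≠ 0) (h : Tendsto (fun i => a i ^ k) l (nhds 0)) :
    Tendsto a l (nhds 0) := by
  have hroot : ContinuousAt (fun y : ℝ => y ^ (k⁻¹ : ℝ)) 0 :=
    Real.continuousAt_rpow_const 0 _ (Or.inr (by positivity))
  have := hroot.tendsto.comp h
  rw [Function.comp_def, Real.zero_rpow (by positivity)] at this
  exact this.congr fun i => Real.pow_rpow_inv_natCast (ha i) hk

/-- If on every successful iteration the decrease is at least `η₁(σ_min/3)‖s_j‖³`, then
the number of successful iterations with `‖s_j‖ ≥ 1` is at most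
`⌊(3/(η₁σ_min))(f(x₀) − f_low)⌋`, the series `Σ‖s_j‖³` over successful iterations
converges, and `‖s_j‖ → 0` along successful iterations. -/
theorem arc_step_summability {n : ℕ} (f : EuclideanSpace ℝ (Fin n) → ℝ)
    (x s : ℕ → EuclideanSpace ℝ (Fin n)) (flow η₁ σmin : ℝ)
    (hη₁ : η₁ ∈ Set.Ioo (0:ℝ) 1) (hσmin : 0 < σmin)
    (hlow : ∀ y, flow ≤ f y)
    (S : Set ℕ)
    (hsucc : ∀ j ∈ S, x (j+1) = x j + s j ∧
      f (x j) - f (x (j+1)) ≥ η₁ * (σmin/3) * ‖s j‖^3)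
    (hunsucc : ∀ j ∉ S, x (j+1) = x j) :
    (∀ T : Finset ℕ, (∀ j ∈ T, j ∈ S ∧ 1 ≤ ‖s j‖) →
      T.card ≤ ⌊3 / (η₁ * σmin) * (f (x 0) - flow)⌋₊) ∧
    Summable (S.indicator fun j => ‖s j‖^3) ∧
    Tendsto (fun j => ‖s j‖) (atTop ⊓ 𝓟 S) (nhds 0) := by
  set c := η₁ * (σmin / 3)
  have hc : 0 < c := mul_pos hη₁.1 (by positivity)
  set d := fun j => c * S.indicator (fun j => ‖s j‖ ^ 3) j
  have hd₀ : ∀ j, 0 ≤ d j := fun j =>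
    mul_nonneg hc.le (Set.indicator_nonneg (fun _ _ => by positivity) j)
  have hd : ∀ j, d j ≤ f (x j) - f (x (j + 1)) := by
    intro j
    by_cases hj : j ∈ S
    · simpa [d, hj] using (hsucc j hj).2
    · simp [d, hj, hunsucc j hj]
  have hL : ∀ j, flow ≤ f (x j) := fun j => hlow (x j)
  have hsum : Summable (S.indicator fun j => ‖s j‖ ^ 3) :=
    (summable_mul_left_iff hc.ne').1 (summable_of_le_sub hd₀ hd hL)
  refine ⟨fun T hT => ?_, hsum, ?_⟩
  · have hcard := card_mul_le_sub_of_le_sub hd₀ hd hL T fun j hj => by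
      simpa [d, (hT j hj).1] using mul_le_mul_of_nonneg_left (one_le_pow₀ (hT j hj).2) hc.le
    refine Nat.le_floor ?_
    rw [← le_div_iff₀ hc] at hcard
    convert hcard using 1
    simp only [c]
    field_simp
  · exact tendsto_zero_of_tendsto_pow_zero (fun j => norm_nonneg _) three_ne_zero
      (tendsto_inf_principal_of_tendsto_indicator hsum.tendsto_atTop_zero)
end

section
/- Suppose B is symmetric with smallest eigenvalue λ_min(B) ≥ λ > 0, σ > 0, and s satisfies ‖∇f(x) + Bs + σ‖s‖s‖ ≤ θ‖∇f(x)‖ with θ ∈ [0,1). Then ‖s‖ ≤ ((1+θ)/λ)‖∇f(x)‖. -/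
open scoped RealInnerProductSpace

/-! `B + σ‖s‖ I` is `λ`-coercive, so `λ‖s‖ ≤ ‖(B + σ‖s‖ I) s‖ = ‖r - ∇f(x)‖ ≤ (1 + θ)‖∇f(x)‖`,
where `r` is the residual of the model-gradient condition. -/

section Coercive

variable {E : Type*} [NormedAddCommGroup E] [InnerProductSpace ℝ E]

theorem mul_norm_le_norm_of_mul_norm_sq_le_inner {lam : ℝ} {v w : E}
    (h : lam * ‖v‖ ^ 2 ≤ ⟪w, v⟫) : lam * ‖v‖ ≤ ‖w‖ := by
  rcases (norm_nonneg v).eq_or_lt with hv | hv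
  · simp [← hv]
  · have : lam * ‖v‖ * ‖v‖ ≤ ‖w‖ * ‖v‖ := by
      nlinarith [real_inner_le_norm w v]
    exact le_of_mul_le_mul_right this hv

theorem mul_norm_sq_le_inner_add_smul {B : E → E} {lam c : ℝ}
    (hB : ∀ v, ⟪B v, v⟫ ≥ lam * ‖v‖ ^ 2) (hc : 0 ≤ c) (v : E) :
    lam * ‖v‖ ^ 2 ≤ ⟪B v + c • v, v⟫ := by
  rw [inner_add_left, real_inner_smul_left, real_inner_self_eq_norm_sq]
  nlinarith [hB v, mul_nonneg hc (sq_nonneg ‖v‖)]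

end Coercive

theorem arc_step_upper_bound_general {n : ℕ} (f : EuclideanSpace ℝ (Fin n) → ℝ)
    (x s : EuclideanSpace ℝ (Fin n))
    (B : EuclideanSpace ℝ (Fin n) →L[ℝ] EuclideanSpace ℝ (Fin n))
    (lam σ θ : ℝ) (hlam : 0 < lam)
    (hpd : ∀ v : EuclideanSpace ℝ (Fin n), ⟪B v, v⟫ ≥ lam * ‖v‖^2)
    (hσ : 0 < σ)
    (hstep : ‖gradient f x + B s + (σ * ‖s‖) • s‖ ≤ θ * ‖gradient f x‖) :
    ‖s‖ ≤ (1 + θ)/lam * ‖gradient f x‖ := by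
  set g := gradient f x
  have hlower : lam * ‖s‖ ≤ ‖B s + (σ * ‖s‖) • s‖ :=
    mul_norm_le_norm_of_mul_norm_sq_le_inner
      (mul_norm_sq_le_inner_add_smul hpd (by positivity) s)
  have hupper : ‖B s + (σ * ‖s‖) • s‖ ≤ (1 + θ) * ‖g‖ :=
    calc ‖B s + (σ * ‖s‖) • s‖ = ‖(g + B s + (σ * ‖s‖) • s) - g‖ := by
          rw [add_assoc, add_sub_cancel_left]
      _ ≤ ‖g + B s + (σ * ‖s‖) • s‖ + ‖g‖ := norm_sub_le _ _
      _ ≤ (1 + θ) * ‖g‖ := by linarith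
  rw [div_mul_eq_mul_div, le_div_iff₀ hlam]
  linarith

/-- Upper bound on the step length when the Hessian approximation is uniformly positive
definite: if `λ_min(B) ≥ λ > 0` and `s` satisfies the model-gradient condition, then
`‖s‖ ≤ ((1+θ)/λ)‖∇f(x)‖`. -/
theorem arc_step_upper_bound {n : ℕ} (f : EuclideanSpace ℝ (Fin n) → ℝ)
    (x s : EuclideanSpace ℝ (Fin n))
    (B : EuclideanSpace ℝ (Fin n) →L[ℝ] EuclideanSpace ℝ (Fin n))
    (hBsym : ∀ u v : EuclideanSpace ℝ (Fin n), ⟪B u, v⟫ = ⟪u, B v⟫)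
    (lam σ θ : ℝ) (hlam : 0 < lam)
    (hpd : ∀ v : EuclideanSpace ℝ (Fin n), ⟪B v, v⟫ ≥ lam * ‖v‖^2)
    (hσ : 0 < σ) (hθ : θ ∈ Set.Ico (0:ℝ) 1)
    (hstep : ‖gradient f x + B s + (σ * ‖s‖) • s‖ ≤ θ * ‖gradient f x‖) :
    ‖s‖ ≤ (1 + θ)/lam * ‖gradient f x‖ :=
  arc_step_upper_bound_general f x s B lam σ θ hlam hpd hσ hstep
end
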